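/- Let V_t be the value-iteration iterates (V_0 ≡ 0, V_{t+1}(S) = c(S) + min{(K_0 V_t)(S), (K_1 V_t)(S)}). Then for every t ≥ 0, every source state X ∈ {0,1}, every VIA value Δ ∈ {0,...,Δ_max}, and every battery level e ∈ {0,...,E_max−1}, one has V_t(e+1, X, Δ) ≤ V_t(e, X, Δ); that is, a higher battery level never increases the value-iteration cost-to-go. -/

import Mathlib

open Finset

namespace VIA

/-- The MDP state space: battery level, source state, VIA value. -/
abbrev State (Emax Dmax : ℕ) := Fin (Emax + 1) × Bool × Fin (Dmax + 1)

/-- Deterministic next state given the action `a`, energy arrival `b`,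
source-flip indicator `f`, and channel-success indicator `h`. -/
def nextState (Emax Dmax : ℕ) (s : State Emax Dmax) (a b f h : Bool) :
    State Emax Dmax :=
  let act : Bool := a && decide (0 < s.1.val)
  -- a successful transmission requires transmitting and channel success
  let succ : Bool := act && h
  (⟨min (s.1.val + (if b then 1 else 0) - (if act then 1 else 0)) Emax,
      Nat.lt_succ_of_le (min_le_right _ _)⟩,
   (if f then !s.2.1 else s.2.1),
   ⟨min (if succ then (if f then 1 else 0)
         else (if f then s.2.2.val + 1 else s.2.2.val)) Dmax,
      Nat.lt_succ_of_le (min_le_right _ _)⟩)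

/-- Bernoulli weight: probability `x` for `true`, `1 - x` for `false`. -/
def bern (x : ℝ) : Bool → ℝ := fun b => if b then x else 1 - x

/-- The transition kernel `K_a(s, s')` of the MDP, for action `a`
(`a = true` means transmit).  The source flips with probability `p`
from state `0 = false` and with probability `q` from state `1 = true`;
energy arrives with probability `β`; a transmission succeeds with
probability `ps`. -/
def K (Emax Dmax : ℕ) (p q β ps : ℝ) (a : Bool) (s s' : State Emax Dmax) : ℝ :=
  ∑ b : Bool, ∑ f : Bool, ∑ h : Bool,
    bern β b * bern (if s.2.1 then q else p) f * bern ps h *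
      (if nextState Emax Dmax s a b f h = s' then 1 else 0)

/-- The per-stage cost: the VIA value. -/
def cost (Emax Dmax : ℕ) (s : State Emax Dmax) : ℝ := s.2.2.val

/-- `(K_a V)(s) = ∑_{s'} K_a(s,s') V(s')`. -/
def KV (Emax Dmax : ℕ) (p q β ps : ℝ) (a : Bool) (V : State Emax Dmax → ℝ)
    (s : State Emax Dmax) : ℝ :=
  ∑ s' : State Emax Dmax, K Emax Dmax p q β ps a s s' * V s'

/-- Value iteration: `V_0 ≡ 0`,
`V_{t+1}(s) = c(s) + min{(K_0 V_t)(s), (K_1 V_t)(s)}`. -/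
def Viter (Emax Dmax : ℕ) (p q β ps : ℝ) : ℕ → State Emax Dmax → ℝ
  | 0 => fun _ => 0
  | t + 1 => fun s =>
      cost Emax Dmax s +
        min (KV Emax Dmax p q β ps false (Viter Emax Dmax p q β ps t) s)
            (KV Emax Dmax p q β ps true (Viter Emax Dmax p q β ps t) s)

/-- `ΔV_t(s) = (K_1 V_t)(s) − (K_0 V_t)(s)`. -/
def dV (Emax Dmax : ℕ) (p q β ps : ℝ) (t : ℕ) (s : State Emax Dmax) : ℝ :=
  KV Emax Dmax p q β ps true (Viter Emax Dmax p q β ps t) s -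
    KV Emax Dmax p q β ps false (Viter Emax Dmax p q β ps t) s

/-!
Induction on `t`. Let `s = (e, X, Δ)` and `s' = (e', X, Δ)` with `e ≤ e'`, and fix the energy
arrival, source flip and channel outcome. If both states take the same effective action, their
successors share `X'` and `Δ'` and the successor of `s'` has the larger battery, so the inductive
hypothesis bounds every term of `K_a V_t` at `s'` by the one at `s`. The effective actions differ
only when `e = 0` and the action is to transmit; there transmitting is the same as idling, and
idling from `s'` is already no worse.
-/

lemma bern_nonneg {x : ℝ} (hx : x ∈ Set.Icc 0 1) (b : Bool) : 0 ≤ bern x b := by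
  cases b <;> simp only [bern, Bool.false_eq_true, ↓reduceIte, sub_nonneg]
  exacts [hx.2, hx.1]

variable {Emax Dmax : ℕ} {p q β ps : ℝ}

lemma KV_eq_sum_bern (a : Bool) (V : State Emax Dmax → ℝ) (s : State Emax Dmax) :
    KV Emax Dmax p q β ps a V s =
      ∑ b : Bool, ∑ f : Bool, ∑ h : Bool,
        bern β b * bern (if s.2.1 then q else p) f * bern ps h *
          V (nextState Emax Dmax s a b f h) := by
  simp only [KV, K, Finset.sum_mul, mul_assoc, ite_mul, one_mul, zero_mul]
  rw [Finset.sum_comm]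
  refine Finset.sum_congr rfl fun b _ => ?_
  rw [Finset.sum_comm]
  refine Finset.sum_congr rfl fun f _ => ?_
  rw [Finset.sum_comm]
  simp [← Finset.mul_sum]

lemma KV_le_KV (hp : p ∈ Set.Icc 0 1) (hq : q ∈ Set.Icc 0 1)
    (hβ : β ∈ Set.Icc 0 1) (hps : ps ∈ Set.Icc 0 1) {V : State Emax Dmax → ℝ}
    {a a' : Bool} {s s' : State Emax Dmax} (hX : s.2.1 = s'.2.1)
    (hV : ∀ b f h, V (nextState Emax Dmax s a b f h) ≤ V (nextState Emax Dmax s' a' b f h)) :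
    KV Emax Dmax p q β ps a V s ≤ KV Emax Dmax p q β ps a' V s' := by
  have hflip : (if s'.2.1 then q else p) ∈ Set.Icc 0 1 := by split <;> assumption
  rw [KV_eq_sum_bern, KV_eq_sum_bern, hX]
  gcongr with b _ f _ h _
  · exact mul_nonneg (mul_nonneg (bern_nonneg hβ b) (bern_nonneg hflip f)) (bern_nonneg hps h)
  · exact hV b f h

lemma nextState_true_of_battery_eq_zero {s : State Emax Dmax} (hs : (s.1 : ℕ) = 0)
    (b f h : Bool) : nextState Emax Dmax s true b f h = nextState Emax Dmax s false b f h := by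
  simp [nextState, hs]

lemma KV_true_of_battery_eq_zero (V : State Emax Dmax → ℝ)
    {s : State Emax Dmax} (hs : (s.1 : ℕ) = 0) :
    KV Emax Dmax p q β ps true V s = KV Emax Dmax p q β ps false V s := by
  simp only [KV, K, nextState_true_of_battery_eq_zero hs]

lemma nextState_mono_battery {s s' : State Emax Dmax} (h2 : s.2 = s'.2) (h1 : s.1 ≤ s'.1)
    {a : Bool} (ha : a = false ∨ 0 < (s.1 : ℕ)) (b f h : Bool) :
    (nextState Emax Dmax s a b f h).2 = (nextState Emax Dmax s' a b f h).2 ∧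
      (nextState Emax Dmax s a b f h).1 ≤ (nextState Emax Dmax s' a b f h).1 := by
  obtain ⟨e, X, D⟩ := s
  obtain ⟨e', X', D'⟩ := s'
  obtain ⟨rfl, rfl⟩ := Prod.mk.inj h2
  dsimp only at h1 ha ⊢
  rw [Fin.le_def] at h1
  have hact : (a && decide (0 < (e : ℕ))) = (a && decide (0 < (e' : ℕ))) := by
    rcases ha with rfl | hpos
    · rfl
    · simp [hpos, hpos.trans_le h1]
  simp only [nextState, hact, Fin.mk_le_mk, true_and]
  omega

def BatteryAntitone (V : State Emax Dmax → ℝ) : Prop :=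
  ∀ ⦃s s' : State Emax Dmax⦄, s.2 = s'.2 → s.1 ≤ s'.1 → V s' ≤ V s

lemma BatteryAntitone.KV_le (hp : p ∈ Set.Icc 0 1) (hq : q ∈ Set.Icc 0 1)
    (hβ : β ∈ Set.Icc 0 1) (hps : ps ∈ Set.Icc 0 1) {V : State Emax Dmax → ℝ}
    (hV : BatteryAntitone V)
    {s s' : State Emax Dmax} (h2 : s.2 = s'.2) (h1 : s.1 ≤ s'.1) {a : Bool}
    (ha : a = false ∨ 0 < (s.1 : ℕ)) :
    KV Emax Dmax p q β ps a V s' ≤ KV Emax Dmax p q β ps a V s :=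
  KV_le_KV hp hq hβ hps (congrArg Prod.fst h2).symm fun b f h =>
    hV (nextState_mono_battery h2 h1 ha b f h).1 (nextState_mono_battery h2 h1 ha b f h).2

lemma BatteryAntitone.min_KV_le (hp : p ∈ Set.Icc 0 1) (hq : q ∈ Set.Icc 0 1)
    (hβ : β ∈ Set.Icc 0 1) (hps : ps ∈ Set.Icc 0 1) {V : State Emax Dmax → ℝ}
    (hV : BatteryAntitone V)
    {s s' : State Emax Dmax} (h2 : s.2 = s'.2) (h1 : s.1 ≤ s'.1) :
    min (KV Emax Dmax p q β ps false V s') (KV Emax Dmax p q β ps true V s') ≤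
      min (KV Emax Dmax p q β ps false V s) (KV Emax Dmax p q β ps true V s) := by
  have hidle := hV.KV_le hp hq hβ hps h2 h1 (Or.inl rfl)
  rcases Nat.eq_zero_or_pos (s.1 : ℕ) with hs | hs
  · rw [KV_true_of_battery_eq_zero V hs, min_self]
    exact (min_le_left _ _).trans hidle
  · exact min_le_min hidle (hV.KV_le hp hq hβ hps h2 h1 (Or.inr hs))

lemma batteryAntitone_Viter (hp : p ∈ Set.Icc 0 1) (hq : q ∈ Set.Icc 0 1)
    (hβ : β ∈ Set.Icc 0 1) (hps : ps ∈ Set.Icc 0 1) (t : ℕ) :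
    BatteryAntitone (Viter Emax Dmax p q β ps t) := by
  induction t with
  | zero => exact fun _ _ _ _ => le_rfl
  | succ t ih =>
    intro s s' h2 h1
    have hcost : cost Emax Dmax s' = cost Emax Dmax s := by simp only [cost, h2]
    simp only [Viter, hcost]
    exact add_le_add_right (ih.min_KV_le hp hq hβ hps h2 h1) _

/-- **Monotonicity in the battery level.**  For every value-iteration step
`t`, source state `X`, VIA value `Δ ≤ Δ_max`, and battery level
`e ∈ {0,…,E_max−1}`, one has `V_t(e+1,X,Δ) ≤ V_t(e,X,Δ)`: a higher battery
level never increases the value-iteration cost-to-go. -/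
theorem value_iteration_antitone_in_battery (Emax Dmax : ℕ)
    (p q β ps : ℝ) (hp0 : 0 ≤ p) (hp1 : p ≤ 1) (hq0 : 0 ≤ q) (hq1 : q ≤ 1)
    (hβ0 : 0 ≤ β) (hβ1 : β ≤ 1) (hps0 : 0 ≤ ps) (hps1 : ps ≤ 1)
    (t : ℕ) (X : Bool) (d : ℕ) (hd : d ≤ Dmax) (e : ℕ) (he : e + 1 ≤ Emax) :
    Viter Emax Dmax p q β ps t (⟨e + 1, by omega⟩, X, ⟨d, by omega⟩) ≤
      Viter Emax Dmax p q β ps t (⟨e, by omega⟩, X, ⟨d, by omega⟩) :=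
  batteryAntitone_Viter ⟨hp0, hp1⟩ ⟨hq0, hq1⟩ ⟨hβ0, hβ1⟩ ⟨hps0, hps1⟩ t rfl
    (Fin.mk_le_mk.mpr e.le_succ)

end VIA
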